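/- With the poset pushout construction (P finite poset, f : P → P' surjective order-preserving, Q = P ∪ {x} one-point extension, Q' and f' : Q → Q' as constructed), for any poset X and order-preserving maps g : P' → X and h : Q → X with g ∘ f = h restricted to P, the unique map m : Q' → X with m restricted to P' equal to g and (if x' exists) m(x') = h(x) is order-preserving. -/
import Mathlib


/-- The order relation on `Q' = P' ∪ {x'}` (encoded as `Option P'` with `none = x'`),
obtained by inserting `x'` above the down-set generated by `SL` and below the up-set
generated by `SU`. -/
def extLe {P' : Type*} [PartialOrder P'] (SL SU : Set P') :
    Option P' → Option P' → Prop
  | some a, some b => a ≤ b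
  | some a, none => ∃ c ∈ SL, a ≤ c
  | none, some b => ∃ c ∈ SU, c ≤ b
  | none, none => True

/-- Poset pushout, universal property: `P` a finite poset, `f : P → P'` surjective
order-preserving, `Q` a one-point extension of `P` by `x`, `L = {p : e p < x}`,
`U = {p : x < e p}`. For any poset `W` and order-preserving maps `g : P' → W`, `h : Q → W`
with `g ∘ f = h` on `P`, the unique map `m : Q' → W` with `m|P' = g` and (if the new point
`x'` exists, i.e. `f(L) ∩ f(U) = ∅`) `m(x') = h(x)` is order-preserving; in the other case
(`y₀ ∈ f(L) ∩ f(U)`, where `Q' = P'` and `f'(x) = y₀`) the map `m = g` composed with `f'`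
is order-preserving. -/
theorem poset_pushout_universal_map_monotone
    {P P' Q W : Type*} [PartialOrder P] [PartialOrder P'] [PartialOrder Q] [PartialOrder W]
    [Fintype P]
    (f : P → P') (hf_mono : Monotone f) (hf_surj : Function.Surjective f)
    (e : P ↪o Q) (x : Q) (hx : x ∉ Set.range e)
    (hcover : ∀ q : Q, q = x ∨ ∃ p : P, e p = q)
    (g : P' → W) (h : Q → W) (hg : Monotone g) (hh : Monotone h)
    (hcomp : ∀ p : P, g (f p) = h (e p)) :
    (f '' {p | e p < x} ∩ f '' {p | x < e p} = ∅ →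
      ∀ u v : Option P', extLe (f '' {p | e p < x}) (f '' {p | x < e p}) u v →
        u.elim (h x) g ≤ v.elim (h x) g) ∧
    (∀ y₀ ∈ f '' {p | e p < x} ∩ f '' {p | x < e p},
      ∀ f' : Q → P', (∀ p : P, f' (e p) = f p) → f' x = y₀ → Monotone (g ∘ f')) := by

  constructor
  · intro _ u v huv
    match u, v with
    | some a, some b => exact hg huv
    | some a, none =>
      obtain ⟨c, ⟨p, hp, rfl⟩, hac⟩ := huv
      calc g a ≤ g (f p) := hg hac
        _ = h (e p) := hcomp p
        _ ≤ h x := hh hp.le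
    | none, some b =>
      obtain ⟨c, ⟨p, hp, rfl⟩, hcb⟩ := huv
      calc h x ≤ h (e p) := hh hp.le
        _ = g (f p) := (hcomp p).symm
        _ ≤ g b := hg hcb
    | none, none => exact le_refl _
  · rintro y₀ ⟨⟨p₀, hp₀, hfp₀⟩, ⟨p₁, hp₁, hfp₁⟩⟩ f' hf'e hf'x q r hqr
    rcases hcover q with rfl | ⟨p, rfl⟩
    · rcases hcover r with rfl | ⟨p', rfl⟩
      · exact le_refl _
      · have hlt : q < e p' := lt_of_le_of_ne hqr (fun hEq => hx ⟨p', hEq.symm⟩)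
        simp only [Function.comp_apply, hf'x, hf'e, ← hfp₀]
        calc g (f p₀) = h (e p₀) := hcomp p₀
          _ ≤ h (e p') := hh (hp₀.le.trans hlt.le)
          _ = g (f p') := (hcomp p').symm
    · rcases hcover r with rfl | ⟨p', rfl⟩
      · have hlt : e p < r := lt_of_le_of_ne hqr (fun hEq => hx ⟨p, hEq⟩)
        simp only [Function.comp_apply, hf'x, hf'e, ← hfp₁]
        calc g (f p) = h (e p) := hcomp p
          _ ≤ h (e p₁) := hh (hlt.le.trans hp₁.le)
          _ = g (f p₁) := (hcomp p₁).symm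
      · have : p ≤ p' := e.le_iff_le.mp hqr
        simp only [Function.comp_apply, hf'e]
        exact hg (hf_mono this)
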